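/- arXiv:1701.06739 — 4 statements merged into one kernel-verified Lean document; each statement's English description precedes it below -/
import Mathlib

section
/- Let (W, μ★) be a probability space, υ : W → (0,1] measurable bounded away from 0, and VE : W → ℝ bounded measurable. For θ ∈ ℝ and x ∈ [0,1], define β_{θ,x}(w) := 1{VE(w) < θ} + x·1{VE(w) = θ}, ω(θ,x) := ∫ υ·β_{θ,x} dμ★, and γ(θ,x) := ∫ υ·β_{θ,x}·VE dμ★. If θ₁ ≤ θ₂, x₁, x₂ ∈ [0,1], with x₁ ≤ x₂ in case θ₁ = θ₂, and both ω(θ₁,x₁) > 0 and ω(θ₂,x₂) > 0, then γ(θ₁,x₁)/ω(θ₁,x₁) ≤ γ(θ₂,x₂)/ω(θ₂,x₂). -/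
/-!
Write `f₁ = υ β_{θ₁,x₁}` and `f₂ = υ β_{θ₂,x₂}`, so `0 ≤ f₁ ≤ f₂`. The weight `f₁` lives on
`{VE ≤ θ₁}` and the increment `f₂ - f₁` on `{VE ≥ θ₁}`, so the `f₁`-mean of `VE` is at most `θ₁`
and the `(f₂ - f₁)`-mean is at least `θ₁`. The `f₂`-mean is the mediant of these two means, hence
at least the first one.
-/

open MeasureTheory

theorem div_le_add_div_add_of_le_mul {a b c d θ : ℝ} (ha : 0 < a) (hb : 0 ≤ b)
    (hc : c ≤ θ * a) (hd : θ * b ≤ d) : c / a ≤ (c + d) / (a + b) := by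
  rw [div_le_div_iff₀ ha (by positivity)]
  nlinarith [mul_le_mul_of_nonneg_right hc hb, mul_le_mul_of_nonneg_left hd ha.le]

theorem integral_mul_div_integral_le_of_le {α : Type*} [MeasurableSpace α] {μ : Measure α}
    {f g V : α → ℝ} (θ : ℝ) (hf : Integrable f μ) (hg : Integrable g μ)
    (hfV : Integrable (fun a => f a * V a) μ) (hgV : Integrable (fun a => g a * V a) μ)
    (hfg : ∀ᵐ a ∂μ, f a ≤ g a) (hfθ : ∀ᵐ a ∂μ, f a * V a ≤ f a * θ)
    (hgθ : ∀ᵐ a ∂μ, (g a - f a) * θ ≤ (g a - f a) * V a) (hf0 : 0 < ∫ a, f a ∂μ) :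
    (∫ a, f a * V a ∂μ) / (∫ a, f a ∂μ) ≤ (∫ a, g a * V a ∂μ) / (∫ a, g a ∂μ) := by
  have hmass : ∫ a, g a ∂μ = (∫ a, f a ∂μ) + ∫ a, (g a - f a) ∂μ := by
    rw [integral_sub hg hf]; ring
  have hmoment : ∫ a, g a * V a ∂μ = (∫ a, f a * V a ∂μ) + ∫ a, (g a - f a) * V a ∂μ := by
    simp only [sub_mul]; rw [integral_sub hgV hfV]; ring
  have hfθ' : ∫ a, f a * V a ∂μ ≤ θ * ∫ a, f a ∂μ := by
    rw [← integral_const_mul]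
    exact integral_mono_ae hfV (hf.const_mul θ) (hfθ.mono fun a h => h.trans_eq (mul_comm _ _))
  have hgθ' : θ * ∫ a, (g a - f a) ∂μ ≤ ∫ a, (g a - f a) * V a ∂μ := by
    rw [← integral_const_mul]
    refine integral_mono_ae ((hg.sub hf).const_mul θ) ?_
      (hgθ.mono fun a h => (mul_comm _ _).trans_le h)
    simp only [sub_mul]
    exact hgV.sub hfV
  rw [hmass, hmoment]
  exact div_le_add_div_add_of_le_mul hf0
    (integral_nonneg_of_ae (hfg.mono fun a h => sub_nonneg.2 h)) hfθ' hgθ'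

/-- `β_{θ,x}(w) = cutoffWeight θ x (VE w)`. -/
noncomputable def cutoffWeight (θ x v : ℝ) : ℝ :=
  (if v < θ then 1 else 0) + x * (if v = θ then 1 else 0)

namespace cutoffWeight

theorem measurable (θ x : ℝ) : Measurable (cutoffWeight θ x) :=
  (Measurable.ite measurableSet_Iio measurable_const measurable_const).add
    ((Measurable.ite (measurableSet_singleton θ) measurable_const measurable_const).const_mul x)

theorem of_lt {θ v : ℝ} (x : ℝ) (h : v < θ) : cutoffWeight θ x v = 1 := by
  simp [cutoffWeight, h, h.ne]

theorem of_gt {θ v : ℝ} (x : ℝ) (h : θ < v) : cutoffWeight θ x v = 0 := by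
  simp [cutoffWeight, h.not_gt, h.ne']

theorem of_eq (θ x : ℝ) : cutoffWeight θ x θ = x := by
  simp [cutoffWeight]

theorem mem_Icc {θ x : ℝ} (hx : x ∈ Set.Icc (0 : ℝ) 1) (v : ℝ) :
    cutoffWeight θ x v ∈ Set.Icc (0 : ℝ) 1 := by
  rcases lt_trichotomy v θ with h | rfl | h
  · simp [of_lt x h]
  · rwa [of_eq]
  · simp [of_gt x h]

theorem mul_le_mul_threshold (θ x v : ℝ) : cutoffWeight θ x v * v ≤ cutoffWeight θ x v * θ := by
  rcases lt_trichotomy v θ with h | rfl | h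
  · simpa [of_lt x h] using h.le
  · rfl
  · simp [of_gt x h]

theorem mono {θ₁ θ₂ x₁ x₂ : ℝ} (hθ : θ₁ ≤ θ₂) (hx₁ : x₁ ≤ 1) (hx₂ : 0 ≤ x₂)
    (hxeq : θ₁ = θ₂ → x₁ ≤ x₂) (v : ℝ) : cutoffWeight θ₁ x₁ v ≤ cutoffWeight θ₂ x₂ v := by
  rcases lt_trichotomy v θ₁ with h | rfl | h
  · rw [of_lt x₁ h, of_lt x₂ (h.trans_le hθ)]
  · rw [of_eq]
    rcases hθ.eq_or_lt with rfl | hlt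
    · rw [of_eq]; exact hxeq rfl
    · rwa [of_lt x₂ hlt]
  · rw [of_gt x₁ h]
    rcases lt_trichotomy v θ₂ with h₂ | rfl | h₂
    · rw [of_lt x₂ h₂]; exact zero_le_one
    · rwa [of_eq]
    · rw [of_gt x₂ h₂]

theorem sub_mul_le_sub_mul {θ₁ θ₂ x₁ x₂ : ℝ} (hθ : θ₁ ≤ θ₂) (hx₁ : x₁ ≤ 1) (hx₂ : 0 ≤ x₂)
    (hxeq : θ₁ = θ₂ → x₁ ≤ x₂) (v : ℝ) :
    (cutoffWeight θ₂ x₂ v - cutoffWeight θ₁ x₁ v) * θ₁ ≤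
      (cutoffWeight θ₂ x₂ v - cutoffWeight θ₁ x₁ v) * v := by
  rcases lt_or_ge v θ₁ with h | h
  · rw [of_lt x₁ h, of_lt x₂ (h.trans_le hθ), sub_self, zero_mul, zero_mul]
  · exact mul_le_mul_of_nonneg_left h (sub_nonneg.2 (mono hθ hx₁ hx₂ hxeq v))

end cutoffWeight

theorem integrable_mul_cutoffWeight {W : Type*} [MeasurableSpace W] {μ : Measure W}
    [IsFiniteMeasure μ] {u V : W → ℝ} (hu : Measurable u) (hu' : ∀ w, u w ∈ Set.Icc (0 : ℝ) 1)
    (hV : Measurable V) {θ x : ℝ} (hx : x ∈ Set.Icc (0 : ℝ) 1) :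
    Integrable (fun w => u w * cutoffWeight θ x (V w)) μ :=
  Integrable.of_mem_Icc 0 1 (hu.mul ((cutoffWeight.measurable θ x).comp hV)).aemeasurable
    (ae_of_all _ fun w => ⟨mul_nonneg (hu' w).1 (cutoffWeight.mem_Icc hx _).1,
      mul_le_one₀ (hu' w).2 (cutoffWeight.mem_Icc hx _).1 (cutoffWeight.mem_Icc hx _).2⟩)

theorem stmt1_general
    {W : Type*} [MeasurableSpace W] (μstar : Measure W) [IsProbabilityMeasure μstar]
    (ups VE : W → ℝ)
    (hups : Measurable ups) (hups' : ∀ w, 0 < ups w ∧ ups w ≤ 1)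
    (hVE : Measurable VE) (hVEbdd : ∃ M : ℝ, ∀ w, |VE w| ≤ M)
    (θ1 θ2 x1 x2 : ℝ)
    (hθ : θ1 ≤ θ2) (hx1 : x1 ∈ Set.Icc (0:ℝ) 1) (hx2 : x2 ∈ Set.Icc (0:ℝ) 1)
    (hxeq : θ1 = θ2 → x1 ≤ x2)
    (hω1 : 0 < ∫ w, ups w * ((if VE w < θ1 then (1:ℝ) else 0)
            + x1 * (if VE w = θ1 then (1:ℝ) else 0)) ∂μstar) :
    (∫ w, ups w * ((if VE w < θ1 then (1:ℝ) else 0)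
        + x1 * (if VE w = θ1 then (1:ℝ) else 0)) * VE w ∂μstar)
      / (∫ w, ups w * ((if VE w < θ1 then (1:ℝ) else 0)
        + x1 * (if VE w = θ1 then (1:ℝ) else 0)) ∂μstar)
    ≤ (∫ w, ups w * ((if VE w < θ2 then (1:ℝ) else 0)
        + x2 * (if VE w = θ2 then (1:ℝ) else 0)) * VE w ∂μstar)
      / (∫ w, ups w * ((if VE w < θ2 then (1:ℝ) else 0)
        + x2 * (if VE w = θ2 then (1:ℝ) else 0)) ∂μstar) := by
  obtain ⟨M, hM⟩ := hVEbdd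
  have hups01 : ∀ w, ups w ∈ Set.Icc (0 : ℝ) 1 := fun w => ⟨(hups' w).1.le, (hups' w).2⟩
  have hf := integrable_mul_cutoffWeight (μ := μstar) hups hups01 hVE hx1 (θ := θ1)
  have hg := integrable_mul_cutoffWeight (μ := μstar) hups hups01 hVE hx2 (θ := θ2)
  have hVbdd : ∀ᵐ w ∂μstar, ‖VE w‖ ≤ M := ae_of_all _ hM
  refine integral_mul_div_integral_le_of_le (V := VE) θ1 hf hg
    (hf.mul_bdd hVE.aestronglyMeasurable hVbdd) (hg.mul_bdd hVE.aestronglyMeasurable hVbdd)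
    (ae_of_all _ fun w => ?_) (ae_of_all _ fun w => ?_) (ae_of_all _ fun w => ?_) hω1
  · exact mul_le_mul_of_nonneg_left
      (cutoffWeight.mono hθ hx1.2 hx2.1 hxeq (VE w)) (hups' w).1.le
  · rw [mul_assoc, mul_assoc]
    exact mul_le_mul_of_nonneg_left
      (cutoffWeight.mul_le_mul_threshold θ1 x1 (VE w)) (hups' w).1.le
  · rw [← mul_sub, mul_assoc, mul_assoc]
    exact mul_le_mul_of_nonneg_left
      (cutoffWeight.sub_mul_le_sub_mul hθ hx1.2 hx2.1 hxeq (VE w)) (hups' w).1.le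

theorem stmt1
    {W : Type*} [MeasurableSpace W] (μstar : Measure W) [IsProbabilityMeasure μstar]
    (ups VE : W → ℝ)
    (hups : Measurable ups) (hups' : ∀ w, 0 < ups w ∧ ups w ≤ 1)
    (hVE : Measurable VE) (hVEbdd : ∃ M : ℝ, ∀ w, |VE w| ≤ M)
    (θ1 θ2 x1 x2 : ℝ)
    (hθ : θ1 ≤ θ2) (hx1 : x1 ∈ Set.Icc (0:ℝ) 1) (hx2 : x2 ∈ Set.Icc (0:ℝ) 1)
    (hxeq : θ1 = θ2 → x1 ≤ x2)
    (hω1 : 0 < ∫ w, ups w * ((if VE w < θ1 then (1:ℝ) else 0)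
            + x1 * (if VE w = θ1 then (1:ℝ) else 0)) ∂μstar)
    (hω2 : 0 < ∫ w, ups w * ((if VE w < θ2 then (1:ℝ) else 0)
            + x2 * (if VE w = θ2 then (1:ℝ) else 0)) ∂μstar) :
    (∫ w, ups w * ((if VE w < θ1 then (1:ℝ) else 0)
        + x1 * (if VE w = θ1 then (1:ℝ) else 0)) * VE w ∂μstar)
      / (∫ w, ups w * ((if VE w < θ1 then (1:ℝ) else 0)
        + x1 * (if VE w = θ1 then (1:ℝ) else 0)) ∂μstar)
    ≤ (∫ w, ups w * ((if VE w < θ2 then (1:ℝ) else 0)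
        + x2 * (if VE w = θ2 then (1:ℝ) else 0)) * VE w ∂μstar)
      / (∫ w, ups w * ((if VE w < θ2 then (1:ℝ) else 0)
        + x2 * (if VE w = θ2 then (1:ℝ) else 0)) ∂μstar) :=
  stmt1_general μstar ups VE hups hups' hVE hVEbdd θ1 θ2 x1 x2 hθ hx1 hx2 hxeq hω1
end

section
/- Let (W, μ★) be a probability space, υ : W → [δ,1] measurable with δ > 0, and VE : W → ℝ bounded measurable. Suppose λ ≡ 0 and μ₁ < μ₂ are two values in (0, ∫ υ dμ★]. Define θ_μ := sup{θ : ∫ υ·1{VE < θ} dμ★ ≤ μ} and, taking η_μ minimal with ∫ υ·(1{VE < θ_μ} + η_μ 1{VE = θ_μ}) dμ★ = μ, set φ_μ := ∫ υ·β_μ·VE dμ★ / ∫ υ·β_μ dμ★ with β_μ := 1{VE < θ_μ} + η_μ 1{VE = θ_μ}. Then φ_{μ₁} ≤ φ_{μ₂}. -/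
/-!
Write `β_μ` for the threshold weight `1{VE < θ_μ} + η_μ 1{VE = θ_μ}` and `φ_μ` for the
`υ β_μ`-weighted mean of `VE`. Since `β_{μ₁}` lives on `{VE ≤ θ_{μ₁}}`, `φ_{μ₁} ≤ θ_{μ₁}`.
The sublevel sets defining `θ_μ` grow with `μ`, so `θ_{μ₁} ≤ θ_{μ₂}`; hence the extra mass
`β_{μ₂} - β_{μ₁}` is `≥ 0` above `θ_{μ₁}`, `0` below it, and its `υ`-integral is `μ₂ - μ₁`.
So `φ_{μ₂}` averages `φ_{μ₁}` with values that are at least `θ_{μ₁}`, and therefore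
`φ_{μ₁} ≤ φ_{μ₂}`.
-/

open MeasureTheory

section WeightedMean

variable {α : Type*} [MeasurableSpace α] {μ : Measure α} {f g₁ g₂ : α → ℝ} {c : ℝ}

theorem integral_mul_div_integral_le_of_threshold
    (hg₁ : Integrable g₁ μ) (hg₂ : Integrable g₂ μ)
    (hg₁f : Integrable (fun x => g₁ x * f x) μ) (hg₂f : Integrable (fun x => g₂ x * f x) μ)
    (hpos : 0 < ∫ x, g₁ x ∂μ) (hle : ∫ x, g₁ x ∂μ ≤ ∫ x, g₂ x ∂μ)
    (h₁ : ∀ᵐ x ∂μ, 0 ≤ g₁ x * (c - f x)) (h₁₂ : ∀ᵐ x ∂μ, 0 ≤ (g₂ x - g₁ x) * (f x - c)) :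
    (∫ x, g₁ x * f x ∂μ) / ∫ x, g₁ x ∂μ ≤ (∫ x, g₂ x * f x ∂μ) / ∫ x, g₂ x ∂μ := by
  have hmean₁ : ∫ x, g₁ x * f x ∂μ ≤ c * ∫ x, g₁ x ∂μ := by
    rw [← integral_const_mul]
    exact integral_mono_ae hg₁f (hg₁.const_mul c) (h₁.mono fun x hx => by linarith)
  have hincr : c * (∫ x, g₂ x ∂μ - ∫ x, g₁ x ∂μ) ≤ ∫ x, g₂ x * f x ∂μ - ∫ x, g₁ x * f x ∂μ := by
    rw [← integral_sub hg₂ hg₁, ← integral_sub hg₂f hg₁f, ← integral_const_mul]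
    exact integral_mono_ae ((hg₂.sub hg₁).const_mul c) (hg₂f.sub hg₁f)
      (h₁₂.mono fun x hx => by linarith)
  rw [div_le_div_iff₀ hpos (hpos.trans_le hle)]
  nlinarith [mul_le_mul_of_nonneg_right hmean₁ (sub_nonneg.2 hle),
    mul_le_mul_of_nonneg_right hincr hpos.le]

end WeightedMean

section Indicator

variable {α : Type*} [MeasurableSpace α] {μ : Measure α} {f g : α → ℝ} {θ : ℝ}

theorem integral_mul_ite_lt_of_ae_lt (h : ∀ᵐ x ∂μ, f x < θ) :
    ∫ x, g x * (if f x < θ then 1 else 0) ∂μ = ∫ x, g x ∂μ :=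
  integral_congr_ae (h.mono fun x hx => by simp [hx])

theorem integral_mul_ite_lt_of_le (h : ∀ x, θ ≤ f x) :
    ∫ x, g x * (if f x < θ then 1 else 0) ∂μ = 0 := by
  simp [fun x => (h x).not_gt]

theorem ae_eq_one_of_integral_mul_eq {β : α → ℝ} (hg : Integrable g μ)
    (hgβ : Integrable (fun x => g x * β x) μ) (hgpos : ∀ᵐ x ∂μ, 0 < g x)
    (hβ : ∀ᵐ x ∂μ, β x ≤ 1) (h : ∫ x, g x * β x ∂μ = ∫ x, g x ∂μ) :
    ∀ᵐ x ∂μ, β x = 1 := by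
  have hgap : ∫ x, g x * (1 - β x) ∂μ = 0 := by
    simp only [mul_one_sub]
    rw [integral_sub hg hgβ, h, sub_self]
  have hgap_nonneg : 0 ≤ᵐ[μ] fun x => g x * (1 - β x) := by
    filter_upwards [hgpos, hβ] with x hgx hβx
    exact mul_nonneg hgx.le (sub_nonneg.2 hβx)
  have hgap_int : Integrable (fun x => g x * (1 - β x)) μ := by
    simp only [mul_one_sub]
    exact hg.sub hgβ
  filter_upwards [(integral_eq_zero_iff_of_nonneg_ae hgap_nonneg hgap_int).1 hgap, hgpos]
    with x hx hgx
  have := (mul_eq_zero.1 hx).resolve_left hgx.ne'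
  linarith

end Indicator

noncomputable def thresholdWeight (θ η x : ℝ) : ℝ :=
  (if x < θ then 1 else 0) + η * (if x = θ then 1 else 0)

section ThresholdWeight

variable {θ θ' η η' x : ℝ}

theorem thresholdWeight_of_lt (h : θ < x) : thresholdWeight θ η x = 0 := by
  simp [thresholdWeight, h.not_gt, h.ne']

theorem thresholdWeight_nonneg (hη : 0 ≤ η) : 0 ≤ thresholdWeight θ η x := by
  unfold thresholdWeight; split_ifs <;> linarith

theorem thresholdWeight_le_one (hη : η ≤ 1) : thresholdWeight θ η x ≤ 1 := by
  unfold thresholdWeight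
  split_ifs with hlt heq
  · exact absurd heq hlt.ne
  all_goals linarith

theorem abs_thresholdWeight_le_one (hη : η ∈ Set.Icc (0 : ℝ) 1) : |thresholdWeight θ η x| ≤ 1 :=
  abs_le.2 ⟨(neg_nonpos.2 zero_le_one).trans (thresholdWeight_nonneg hη.1),
    thresholdWeight_le_one hη.2⟩

theorem measurable_thresholdWeight : Measurable (thresholdWeight θ η) :=
  (Measurable.ite measurableSet_Iio measurable_const measurable_const).add
    (measurable_const.mul (Measurable.ite (measurableSet_singleton θ) measurable_const
      measurable_const))

theorem thresholdWeight_mul_sub_nonneg (hη : 0 ≤ η) : 0 ≤ thresholdWeight θ η x * (θ - x) := by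
  rcases lt_trichotomy x θ with h | rfl | h
  · exact mul_nonneg (thresholdWeight_nonneg hη) (by linarith)
  · simp
  · simp [thresholdWeight_of_lt h]

theorem thresholdWeight_sub_mul_sub_nonneg (hθ : θ ≤ θ') (hη' : 0 ≤ η') :
    0 ≤ (thresholdWeight θ' η' x - thresholdWeight θ η x) * (x - θ) := by
  rcases lt_trichotomy x θ with h | rfl | h
  · simp [thresholdWeight, h, h.ne, h.trans_le hθ, (h.trans_le hθ).ne]
  · simp
  · rw [thresholdWeight_of_lt h, sub_zero]
    exact mul_nonneg (thresholdWeight_nonneg hη') (by linarith)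

end ThresholdWeight

section LowerThreshold

variable {α : Type*} [MeasurableSpace α] {μ : Measure α} {f g : α → ℝ}

/-- The paper's `θ_m`. For `m ≥ ∫ g` the set is unbounded and `sSup` returns the junk value `0`. -/
noncomputable def lowerThreshold (μ : Measure α) (g f : α → ℝ) (m : ℝ) : ℝ :=
  sSup {θ : ℝ | ∫ x, g x * (if f x < θ then 1 else 0) ∂μ ≤ m}

theorem MeasureTheory.Integrable.mul_thresholdWeight_comp (hg : Integrable g μ)
    (hf : Measurable f) {θ η : ℝ} (hη : η ∈ Set.Icc (0 : ℝ) 1) :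
    Integrable (fun x => g x * thresholdWeight θ η (f x)) μ :=
  hg.mul_bdd (measurable_thresholdWeight.comp hf).aestronglyMeasurable
    (ae_of_all _ fun _ => abs_thresholdWeight_le_one hη)

theorem MeasureTheory.Integrable.mul_thresholdWeight_comp_mul (hg : Integrable g μ)
    (hf : Measurable f) {M : ℝ} (hM : ∀ x, |f x| ≤ M) {θ η : ℝ} (hη : η ∈ Set.Icc (0 : ℝ) 1) :
    Integrable (fun x => g x * thresholdWeight θ η (f x) * f x) μ :=
  (hg.mul_thresholdWeight_comp hf hη).mul_bdd hf.aestronglyMeasurable (ae_of_all _ hM)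

/-- When `m₂ = ∫ g` the threshold `θ_{m₂}` is pinned down not by its definition but by the
normalisation `∫ g β_{m₂} = m₂`, which forces `f ≤ θ_{m₂}` almost everywhere. -/
theorem lowerThreshold_le_lowerThreshold (hf : Measurable f) {M : ℝ} (hM : ∀ x, |f x| ≤ M)
    (hg : Integrable g μ) (hgpos : ∀ x, 0 < g x) {m₁ m₂ η : ℝ} (hm₁ : 0 ≤ m₁) (hm₁₂ : m₁ < m₂)
    (hm₂ : m₂ ≤ ∫ x, g x ∂μ) (hη : η ∈ Set.Icc (0 : ℝ) 1)
    (hnorm : ∫ x, g x * thresholdWeight (lowerThreshold μ g f m₂) η (f x) ∂μ = m₂) :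
    lowerThreshold μ g f m₁ ≤ lowerThreshold μ g f m₂ := by
  have hbelow : -(M + 1) ∈ {θ : ℝ | ∫ x, g x * (if f x < θ then 1 else 0) ∂μ ≤ m₁} := by
    rw [Set.mem_ofPred_eq, integral_mul_ite_lt_of_le fun x => by linarith [neg_abs_le (f x), hM x]]
    exact hm₁
  rcases hm₂.lt_or_eq with hlt | rfl
  · refine csSup_le_csSup ⟨M, fun θ hθ => le_of_not_gt fun hMθ => ?_⟩ ⟨_, hbelow⟩
      fun θ hθ => hθ.trans hm₁₂.le
    rw [Set.mem_ofPred_eq, integral_mul_ite_lt_of_ae_lt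
      (ae_of_all _ fun x => (le_abs_self _).trans (hM x) |>.trans_lt hMθ)] at hθ
    linarith
  · have hae : ∀ᵐ x ∂μ, f x ≤ lowerThreshold μ g f (∫ x, g x ∂μ) := by
      filter_upwards [ae_eq_one_of_integral_mul_eq hg (hg.mul_thresholdWeight_comp hf hη)
        (ae_of_all _ hgpos) (ae_of_all _ fun _ => thresholdWeight_le_one hη.2) hnorm] with x hx
      exact le_of_not_gt fun h => by simp [thresholdWeight_of_lt h] at hx
    refine csSup_le ⟨_, hbelow⟩ fun θ hθ => le_of_not_gt fun hθ' => ?_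
    rw [Set.mem_ofPred_eq, integral_mul_ite_lt_of_ae_lt (hae.mono fun x hx => hx.trans_lt hθ')]
      at hθ
    linarith

end LowerThreshold

theorem stmt2_general
    {W : Type*} [MeasurableSpace W] (μstar : Measure W) [IsProbabilityMeasure μstar]
    (ups VE : W → ℝ) (δ : ℝ) (hδ : 0 < δ)
    (hups : Measurable ups) (hups' : ∀ w, ups w ∈ Set.Icc δ 1)
    (hVE : Measurable VE) (hVEbdd : ∃ M : ℝ, ∀ w, |VE w| ≤ M)
    (μ1 μ2 θ1 θ2 η1 η2 : ℝ)
    (hμ1 : 0 < μ1) (hμ12 : μ1 < μ2) (hμ2 : μ2 ≤ ∫ w, ups w ∂μstar)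
    (hθ1 : θ1 = sSup {θ : ℝ | ∫ w, ups w * (if VE w < θ then (1:ℝ) else 0) ∂μstar ≤ μ1})
    (hθ2 : θ2 = sSup {θ : ℝ | ∫ w, ups w * (if VE w < θ then (1:ℝ) else 0) ∂μstar ≤ μ2})
    (hη1 : η1 ∈ Set.Icc (0:ℝ) 1) (hη2 : η2 ∈ Set.Icc (0:ℝ) 1)
    (heq1 : ∫ w, ups w * ((if VE w < θ1 then (1:ℝ) else 0)
        + η1 * (if VE w = θ1 then (1:ℝ) else 0)) ∂μstar = μ1)
    (heq2 : ∫ w, ups w * ((if VE w < θ2 then (1:ℝ) else 0)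
        + η2 * (if VE w = θ2 then (1:ℝ) else 0)) ∂μstar = μ2) :
    (∫ w, ups w * ((if VE w < θ1 then (1:ℝ) else 0)
        + η1 * (if VE w = θ1 then (1:ℝ) else 0)) * VE w ∂μstar)
      / (∫ w, ups w * ((if VE w < θ1 then (1:ℝ) else 0)
        + η1 * (if VE w = θ1 then (1:ℝ) else 0)) ∂μstar)
    ≤ (∫ w, ups w * ((if VE w < θ2 then (1:ℝ) else 0)
        + η2 * (if VE w = θ2 then (1:ℝ) else 0)) * VE w ∂μstar)
      / (∫ w, ups w * ((if VE w < θ2 then (1:ℝ) else 0)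
        + η2 * (if VE w = θ2 then (1:ℝ) else 0)) ∂μstar) := by
  obtain ⟨M, hM⟩ := hVEbdd
  have hups_pos : ∀ w, 0 < ups w := fun w => hδ.trans_le (hups' w).1
  have hups_int : Integrable ups μstar := .of_bound hups.aestronglyMeasurable 1
    (ae_of_all _ fun w => abs_le.2 ⟨by linarith [hups_pos w], (hups' w).2⟩)
  have hθ12 : θ1 ≤ θ2 := by
    subst hθ1 hθ2
    exact lowerThreshold_le_lowerThreshold hVE hM hups_int hups_pos hμ1.le hμ12 hμ2 hη2 heq2
  refine integral_mul_div_integral_le_of_threshold (c := θ1)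
    (g₁ := fun w => ups w * thresholdWeight θ1 η1 (VE w))
    (g₂ := fun w => ups w * thresholdWeight θ2 η2 (VE w))
    (hups_int.mul_thresholdWeight_comp hVE hη1) (hups_int.mul_thresholdWeight_comp hVE hη2)
    (hups_int.mul_thresholdWeight_comp_mul hVE hM hη1)
    (hups_int.mul_thresholdWeight_comp_mul hVE hM hη2)
    (heq1 ▸ hμ1) (heq1.trans_le (heq2 ▸ hμ12.le)) (ae_of_all _ fun w => ?_)
    (ae_of_all _ fun w => ?_)
  · rw [mul_assoc]
    exact mul_nonneg (hups_pos w).le (thresholdWeight_mul_sub_nonneg hη1.1)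
  · rw [← mul_sub, mul_assoc]
    exact mul_nonneg (hups_pos w).le (thresholdWeight_sub_mul_sub_nonneg hθ12 hη2.1)

theorem stmt2
    {W : Type*} [MeasurableSpace W] (μstar : Measure W) [IsProbabilityMeasure μstar]
    (ups VE : W → ℝ) (δ : ℝ) (hδ : 0 < δ)
    (hups : Measurable ups) (hups' : ∀ w, ups w ∈ Set.Icc δ 1)
    (hVE : Measurable VE) (hVEbdd : ∃ M : ℝ, ∀ w, |VE w| ≤ M)
    (μ1 μ2 θ1 θ2 η1 η2 : ℝ)
    (hμ1 : 0 < μ1) (hμ12 : μ1 < μ2) (hμ2 : μ2 ≤ ∫ w, ups w ∂μstar)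
    (hθ1 : θ1 = sSup {θ : ℝ | ∫ w, ups w * (if VE w < θ then (1:ℝ) else 0) ∂μstar ≤ μ1})
    (hθ2 : θ2 = sSup {θ : ℝ | ∫ w, ups w * (if VE w < θ then (1:ℝ) else 0) ∂μstar ≤ μ2})
    (hη1 : η1 ∈ Set.Icc (0:ℝ) 1) (hη2 : η2 ∈ Set.Icc (0:ℝ) 1)
    (heq1 : ∫ w, ups w * ((if VE w < θ1 then (1:ℝ) else 0)
        + η1 * (if VE w = θ1 then (1:ℝ) else 0)) ∂μstar = μ1)
    (heq2 : ∫ w, ups w * ((if VE w < θ2 then (1:ℝ) else 0)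
        + η2 * (if VE w = θ2 then (1:ℝ) else 0)) ∂μstar = μ2)
    (hη1min : ∀ η ∈ Set.Icc (0:ℝ) 1,
      (∫ w, ups w * ((if VE w < θ1 then (1:ℝ) else 0)
        + η * (if VE w = θ1 then (1:ℝ) else 0)) ∂μstar = μ1) → η1 ≤ η)
    (hη2min : ∀ η ∈ Set.Icc (0:ℝ) 1,
      (∫ w, ups w * ((if VE w < θ2 then (1:ℝ) else 0)
        + η * (if VE w = θ2 then (1:ℝ) else 0)) ∂μstar = μ2) → η2 ≤ η) :
    (∫ w, ups w * ((if VE w < θ1 then (1:ℝ) else 0)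
        + η1 * (if VE w = θ1 then (1:ℝ) else 0)) * VE w ∂μstar)
      / (∫ w, ups w * ((if VE w < θ1 then (1:ℝ) else 0)
        + η1 * (if VE w = θ1 then (1:ℝ) else 0)) ∂μstar)
    ≤ (∫ w, ups w * ((if VE w < θ2 then (1:ℝ) else 0)
        + η2 * (if VE w = θ2 then (1:ℝ) else 0)) * VE w ∂μstar)
      / (∫ w, ups w * ((if VE w < θ2 then (1:ℝ) else 0)
        + η2 * (if VE w = θ2 then (1:ℝ) else 0)) ∂μstar) :=
  stmt2_general μstar ups VE δ hδ hups hups' hVE hVEbdd μ1 μ2 θ1 θ2 η1 η2 hμ1 hμ12 hμ2 hθ1 hθ2 hη1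
    hη2 heq1 heq2
end

section
/- Let (W, μ★) be a probability space, and let VEₙ, VE⁰ : W → ℝ be measurable with ∥VEₙ − VE⁰∥_{L²(μ★)} =: εₙ. Fix θ̂ ∈ ℝ and suppose μ★{VE⁰ = θ̂} = 0. Then for every t > 0: ∫ |1{VEₙ < θ̂} − 1{VE⁰ < θ̂}| dμ★ ≤ μ★{0 ≤ |VE⁰ − θ̂| ≤ t} + εₙ²/t². -/
/-!
The two indicators differ at `w` only if `θ̂` separates `VEₙ w` from `VE⁰ w`, and then
`|VE⁰ w - θ̂| ≤ |VEₙ w - VE⁰ w|`. So either `VE⁰ w` lies within `t` of `θ̂`, or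
`|VEₙ w - VE⁰ w| ≥ t`, an event of mass at most `εₙ² / t²` by Chebyshev's inequality.
-/

open MeasureTheory
open scoped symmDiff

theorem abs_sub_le_abs_sub_of_separated {a b θ : ℝ} (h : a < θ ∧ ¬b < θ ∨ b < θ ∧ ¬a < θ) :
    |b - θ| ≤ |a - b| := by
  rcases h with ⟨ha, hb⟩ | ⟨hb, ha⟩
  · rw [abs_of_nonneg (by linarith), abs_of_neg (by linarith)]; linarith
  · rw [abs_of_neg (by linarith), abs_of_nonneg (by linarith)]; linarith

theorem setOf_lt_symmDiff_subset {α : Type*} (f g : α → ℝ) (θ t : ℝ) :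
    {x | f x < θ} ∆ {x | g x < θ} ⊆ {x | |g x - θ| ≤ t} ∪ {x | t ≤ |f x - g x|} := by
  intro x hx
  have hsep : |g x - θ| ≤ |f x - g x| :=
    abs_sub_le_abs_sub_of_separated (Set.mem_symmDiff.mp hx)
  rcases le_or_gt (|g x - θ|) t with hnear | hfar
  · exact Or.inl hnear
  · exact Or.inr (hfar.le.trans hsep)

theorem integral_abs_indicator_one_sub_indicator_one {α : Type*} [MeasurableSpace α]
    {μ : Measure α} {s t : Set α} (hs : MeasurableSet s) (ht : MeasurableSet t) :
    ∫ x, |s.indicator (1 : α → ℝ) x - t.indicator 1 x| ∂μ = μ.real (s ∆ t) := by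
  rw [← integral_indicator_one (hs.symmDiff ht)]
  congr with x
  rw [← Set.abs_indicator_symmDiff]
  exact abs_of_nonneg (Set.indicator_nonneg (fun _ _ => zero_le_one) x)

theorem measureReal_abs_ge_le_integral_sq_div_sq {α : Type*} [MeasurableSpace α]
    {μ : Measure α} {h : α → ℝ} (hh : Integrable (fun x => h x ^ 2) μ) {t : ℝ} (ht : 0 < t) :
    μ.real {x | t ≤ |h x|} ≤ (∫ x, h x ^ 2 ∂μ) / t ^ 2 := by
  have hset : {x | t ≤ |h x|} = {x | t ^ 2 ≤ h x ^ 2} := by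
    ext x
    simp only [Set.mem_ofPred_eq, ← sq_abs (h x), sq_le_sq₀ ht.le (abs_nonneg _)]
  rw [hset, le_div_iff₀ (by positivity), mul_comm]
  exact mul_meas_ge_le_integral_of_nonneg (.of_forall fun x => sq_nonneg _) hh _

theorem stmt6_general
    {W : Type*} [MeasurableSpace W] (μstar : Measure W) [IsProbabilityMeasure μstar]
    (VEn VE0 : W → ℝ) (hVEn : Measurable VEn) (hVE0 : Measurable VE0)
    (ε θhat : ℝ)
    (hε : ε ^ 2 = ∫ w, (VEn w - VE0 w) ^ 2 ∂μstar)
    (hL2 : Integrable (fun w => (VEn w - VE0 w) ^ 2) μstar) :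
    ∀ t : ℝ, 0 < t →
      ∫ w, |(if VEn w < θhat then (1:ℝ) else 0) - (if VE0 w < θhat then (1:ℝ) else 0)| ∂μstar
        ≤ (μstar {w | |VE0 w - θhat| ≤ t}).toReal + ε ^ 2 / t ^ 2 := by
  intro t ht
  have hn : MeasurableSet {w | VEn w < θhat} := measurableSet_lt hVEn measurable_const
  have h0 : MeasurableSet {w | VE0 w < θhat} := measurableSet_lt hVE0 measurable_const
  calc ∫ w, |(if VEn w < θhat then (1:ℝ) else 0) - (if VE0 w < θhat then (1:ℝ) else 0)| ∂μstar
      = μstar.real ({w | VEn w < θhat} ∆ {w | VE0 w < θhat}) := by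
        simpa only [Set.indicator_apply, Set.mem_ofPred_eq, Pi.one_apply]
          using integral_abs_indicator_one_sub_indicator_one (μ := μstar) hn h0
    _ ≤ μstar.real {w | |VE0 w - θhat| ≤ t} + μstar.real {w | t ≤ |VEn w - VE0 w|} :=
        (measureReal_mono (setOf_lt_symmDiff_subset VEn VE0 θhat t)).trans
          (measureReal_union_le _ _)
    _ ≤ (μstar {w | |VE0 w - θhat| ≤ t}).toReal + ε ^ 2 / t ^ 2 := by
        rw [hε]
        exact add_le_add_right (measureReal_abs_ge_le_integral_sq_div_sq hL2 ht) _

theorem stmt6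
    {W : Type*} [MeasurableSpace W] (μstar : Measure W) [IsProbabilityMeasure μstar]
    (VEn VE0 : W → ℝ) (hVEn : Measurable VEn) (hVE0 : Measurable VE0)
    (ε θhat : ℝ) (hε0 : 0 ≤ ε)
    (hε : ε ^ 2 = ∫ w, (VEn w - VE0 w) ^ 2 ∂μstar)
    (hL2 : Integrable (fun w => (VEn w - VE0 w) ^ 2) μstar)
    (hnoatom : μstar {w | VE0 w = θhat} = 0) :
    ∀ t : ℝ, 0 < t →
      ∫ w, |(if VEn w < θhat then (1:ℝ) else 0) - (if VE0 w < θhat then (1:ℝ) else 0)| ∂μstar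
        ≤ (μstar {w | |VE0 w - θhat| ≤ t}).toReal + ε ^ 2 / t ^ 2 :=
  stmt6_general μstar VEn VE0 hVEn hVE0 ε θhat hε hL2
end

section
/- Let (W, μ★) be a probability space, λ, υ : W → [0,1] measurable with 0 < δ ≤ υ − λ ≤ 1 pointwise, and VE : W → ℝ bounded measurable with μ★{VE = θ⁰} = 0. Let β⁰ := 1{VE < θ⁰} and βₙ := 1{VEₙ < θₙ} for bounded measurable VEₙ and θₙ ∈ ℝ with ∥VEₙ − VE∥_∞ ≤ εₙ and |θₙ − θ⁰| ≤ εₙ. Suppose there exist C, α > 0 such that μ★{0 < |VE − θ⁰| ≤ t} ≤ C t^α for all t > 0. Then |∫ (υ−λ)(βₙ − β⁰)(VE − θ⁰) dμ★| ≤ 2εₙ · C·(2εₙ)^α. -/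
open MeasureTheory

/-! The integrand vanishes at `w` unless `VE w ≠ θ0` and the two thresholdings disagree there;
disagreement forces `|VE w - θ0| ≤ |VEn w - VE w| + |θn - θ0| ≤ 2 εn`. So the integrand is bounded
by `2 εn` and supported on the margin set `{0 < |VE - θ0| ≤ 2 εn}`, whose mass the margin condition
bounds by `C (2 εn)^α`. -/

lemma abs_sub_le_two_mul_of_lt_iff_ne {x x' θ θ' ε : ℝ} (hx : |x' - x| ≤ ε)
    (hθ : |θ' - θ| ≤ ε) (h : ¬(x' < θ' ↔ x < θ)) : |x - θ| ≤ 2 * ε := by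
  rw [abs_le] at hx hθ ⊢
  constructor
  · by_contra! hlow
    exact h (iff_of_true (by linarith) (by linarith))
  · by_contra! hhigh
    exact h (iff_of_false (not_lt.mpr (by linarith)) (not_lt.mpr (by linarith)))

section ThresholdGap

variable {a x x' θ θ' ε : ℝ}

lemma abs_mul_indicator_sub_mul_le (ha : |a| ≤ 1) (hx : |x' - x| ≤ ε) (hθ : |θ' - θ| ≤ ε) :
    |a * ((if x' < θ' then (1:ℝ) else 0) - (if x < θ then (1:ℝ) else 0)) * (x - θ)|
      ≤ 2 * ε := by
  by_cases h : x' < θ' ↔ x < θ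
  · simp only [h, sub_self, mul_zero, zero_mul, abs_zero]
    linarith [(abs_nonneg _).trans hθ]
  have hjump : |(if x' < θ' then (1:ℝ) else 0) - (if x < θ then (1:ℝ) else 0)| ≤ 1 := by
    split_ifs <;> norm_num
  calc _ = |a| * |(if x' < θ' then (1:ℝ) else 0) - (if x < θ then (1:ℝ) else 0)|
          * |x - θ| := by rw [abs_mul, abs_mul]
    _ ≤ 1 * 1 * (2 * ε) := by
      gcongr
      exact abs_sub_le_two_mul_of_lt_iff_ne hx hθ h
    _ = 2 * ε := by ring

lemma mem_margin_of_mul_indicator_sub_mul_ne_zero (hx : |x' - x| ≤ ε) (hθ : |θ' - θ| ≤ ε)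
    (h : a * ((if x' < θ' then (1:ℝ) else 0) - (if x < θ then (1:ℝ) else 0)) * (x - θ) ≠ 0) :
    0 < |x - θ| ∧ |x - θ| ≤ 2 * ε := by
  have hxθ : x - θ ≠ 0 := right_ne_zero_of_mul h
  have hne : ¬(x' < θ' ↔ x < θ) := fun hiff => h (by simp only [hiff, sub_self, mul_zero,
    zero_mul])
  exact ⟨abs_pos.mpr hxθ, abs_sub_le_two_mul_of_lt_iff_ne hx hθ hne⟩

end ThresholdGap

lemma abs_integral_le_mul_measureReal_of_forall_notMem_eq_zero {W : Type*} [MeasurableSpace W]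
    {μ : Measure W} [IsFiniteMeasure μ] {f : W → ℝ} {s : Set W} {c : ℝ}
    (h0 : ∀ w ∉ s, f w = 0) (hc : ∀ w ∈ s, |f w| ≤ c) :
    |∫ w, f w ∂μ| ≤ c * μ.real s := by
  rw [← setIntegral_eq_integral_of_forall_compl_eq_zero h0]
  exact norm_setIntegral_le_of_norm_le_const (f := f) (measure_lt_top μ s) hc

theorem stmt11_general
    {W : Type*} [MeasurableSpace W] (μstar : Measure W) [IsProbabilityMeasure μstar]
    (lam ups VE VEn : W → ℝ) (δ θ0 θn εn C α : ℝ)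
    (hδ : 0 < δ)
    (hgap : ∀ w, δ ≤ ups w - lam w ∧ ups w - lam w ≤ 1)
    (hεn0 : 0 ≤ εn)
    (hVEclose : ∀ w, |VEn w - VE w| ≤ εn)
    (hθclose : |θn - θ0| ≤ εn)
    (hmargin : ∀ t : ℝ, 0 < t →
      (μstar {w | 0 < |VE w - θ0| ∧ |VE w - θ0| ≤ t}).toReal ≤ C * t ^ α) :
    |∫ w, (ups w - lam w)
        * ((if VEn w < θn then (1:ℝ) else 0) - (if VE w < θ0 then (1:ℝ) else 0))
        * (VE w - θ0) ∂μstar|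
      ≤ 2 * εn * (C * (2 * εn) ^ α) := by
  set S := {w | 0 < |VE w - θ0| ∧ |VE w - θ0| ≤ 2 * εn}
  have hweight : ∀ w, |ups w - lam w| ≤ 1 := fun w =>
    abs_le.mpr ⟨by linarith [(hgap w).1], (hgap w).2⟩
  have hS : 2 * εn * μstar.real S ≤ 2 * εn * (C * (2 * εn) ^ α) := by
    rcases hεn0.eq_or_lt with rfl | hεn
    · simp
    · exact mul_le_mul_of_nonneg_left (hmargin _ (by positivity)) (by positivity)
  refine le_trans ?_ hS
  refine abs_integral_le_mul_measureReal_of_forall_notMem_eq_zero (fun w hw => ?_)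
    (fun w _ => abs_mul_indicator_sub_mul_le (hweight w) (hVEclose w) hθclose)
  by_contra h
  exact hw (mem_margin_of_mul_indicator_sub_mul_ne_zero (hVEclose w) hθclose h)

theorem stmt11
    {W : Type*} [MeasurableSpace W] (μstar : Measure W) [IsProbabilityMeasure μstar]
    (lam ups VE VEn : W → ℝ) (δ θ0 θn εn C α : ℝ)
    (hδ : 0 < δ)
    (hlam : Measurable lam) (hups : Measurable ups)
    (hVE : Measurable VE) (hVEn : Measurable VEn)
    (hlam01 : ∀ w, lam w ∈ Set.Icc (0:ℝ) 1)
    (hups01 : ∀ w, ups w ∈ Set.Icc (0:ℝ) 1)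
    (hgap : ∀ w, δ ≤ ups w - lam w ∧ ups w - lam w ≤ 1)
    (hVEbdd : ∃ M : ℝ, ∀ w, |VE w| ≤ M)
    (hVEnbdd : ∃ M : ℝ, ∀ w, |VEn w| ≤ M)
    (hnoatom : μstar {w | VE w = θ0} = 0)
    (hεn0 : 0 ≤ εn)
    (hVEclose : ∀ w, |VEn w - VE w| ≤ εn)
    (hθclose : |θn - θ0| ≤ εn)
    (hC : 0 < C) (hα : 0 < α)
    (hmargin : ∀ t : ℝ, 0 < t →
      (μstar {w | 0 < |VE w - θ0| ∧ |VE w - θ0| ≤ t}).toReal ≤ C * t ^ α) :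
    |∫ w, (ups w - lam w)
        * ((if VEn w < θn then (1:ℝ) else 0) - (if VE w < θ0 then (1:ℝ) else 0))
        * (VE w - θ0) ∂μstar|
      ≤ 2 * εn * (C * (2 * εn) ^ α) :=
  stmt11_general μstar lam ups VE VEn δ θ0 θn εn C α hδ hgap hεn0 hVEclose hθclose hmargin
end
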